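/- arXiv:2205.11418 — 3 statements merged into one kernel-verified Lean document; each statement's English description precedes it below -/
import Mathlib

section
/- Let c ∈ F_{2^d} \ F_2 where d = gcd(2i, n) = gcd(i, n) < n, let a, b ∈ F_{2^n}, and let ε₁, ε₂ ∈ F_2 (viewed as elements 0 or 1 of F_{2^n}). Then the equation (x + a + ε₁)^{2^i+1} + c·(x + ε₂)^{2^i+1} = b has exactly one solution x in F_{2^n}, namely x = (a + ε₁ + c·ε₂)/(c+1) + ( (c/(c+1)²)·( a^{2^i+1} + (a^{2^i} + a + 1)(ε₁ + ε₂) ) + b/(c+1) )^{1/(2^i+1)}, where the (1/(2^i+1))-th power denotes the inverse of the permutation x ↦ x^{2^i+1} of F_{2^n}. -/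
/-!
In characteristic 2, if `c ^ 2 ^ i = c` then the cross terms of
`(u + c w) ^ (2 ^ i + 1) + c (u + w) ^ (2 ^ i + 1)` cancel in pairs, leaving
`(c + 1) (u ^ (2 ^ i + 1) + c w ^ (2 ^ i + 1))`. With `u = x + s`,
`s = (a + ε₁ + c ε₂) / (c + 1)` and `w = (a + ε₁ + ε₂) / (c + 1)` the equation takes this shape,
so it says that `(x + s) ^ (2 ^ i + 1)` is an explicit constant. This determines `x` because
`x ↦ x ^ (2 ^ i + 1)` permutes `F_{2^n}`: `gcd (2 ^ i + 1) (2 ^ n - 1)` divides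
`gcd (2 ^ (2i) - 1) (2 ^ n - 1) = 2 ^ gcd(2i, n) - 1 = 2 ^ gcd(i, n) - 1`, hence divides
`2 ^ i - 1`, hence divides `2`, and it is odd.
-/

open Function

theorem coprime_two_pow_add_one_two_pow_sub_one {i n : ℕ} (hn : n ≠ 0)
    (h : Nat.gcd (2 * i) n = Nat.gcd i n) : Nat.Coprime (2 ^ i + 1) (2 ^ n - 1) := by
  set g := Nat.gcd (2 ^ i + 1) (2 ^ n - 1)
  have hsq : 2 ^ (2 * i) - 1 = (2 ^ i + 1) * (2 ^ i - 1) := by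
    rw [mul_comm 2 i, pow_mul, ← Nat.sq_sub_sq, one_pow]
  have hg_dvd_sub : g ∣ 2 ^ i - 1 :=
    calc g ∣ Nat.gcd (2 ^ (2 * i) - 1) (2 ^ n - 1) :=
          Nat.dvd_gcd (hsq ▸ (Nat.gcd_dvd_left _ _).mul_right _) (Nat.gcd_dvd_right _ _)
      _ = Nat.gcd (2 ^ i - 1) (2 ^ n - 1) := by
          rw [Nat.pow_sub_one_gcd_pow_sub_one, Nat.pow_sub_one_gcd_pow_sub_one, h]
      _ ∣ 2 ^ i - 1 := Nat.gcd_dvd_left _ _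
  have hg_dvd_two : g ∣ 2 := by
    have := Nat.dvd_sub (Nat.gcd_dvd_left (2 ^ i + 1) (2 ^ n - 1)) hg_dvd_sub
    rwa [show 2 ^ i + 1 - (2 ^ i - 1) = 2 by have := Nat.one_le_two_pow (n := i); omega] at this
  rcases (Nat.dvd_prime Nat.prime_two).mp hg_dvd_two with hg | hg
  · exact hg
  · have htwo_dvd : g ∣ 2 ^ n - 1 := Nat.gcd_dvd_right _ _
    rw [hg] at htwo_dvd
    have := dvd_pow_self 2 hn
    have := Nat.one_le_two_pow (n := n)
    omega

theorem pow_bijective_of_coprime {G₀ : Type*} [GroupWithZero G₀] [Finite G₀] {m : ℕ}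
    (hm0 : m ≠ 0) (hm : (Nat.card G₀ - 1).Coprime m) : Bijective fun x : G₀ => x ^ m := by
  refine Finite.injective_iff_bijective.mp fun u v huv => ?_
  rcases eq_or_ne u 0 with rfl | hu
  · exact ((pow_eq_zero_iff hm0).mp (huv.symm.trans (zero_pow hm0))).symm
  rcases eq_or_ne v 0 with rfl | hv
  · exact (pow_eq_zero_iff hm0).mp (huv.trans (zero_pow hm0))
  have hunits : (Nat.card G₀ˣ).Coprime m := by rwa [Nat.card_units]
  have := (powCoprime hunits).injective (a₁ := Units.mk0 u hu) (a₂ := Units.mk0 v hv)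
    (Units.ext (by simpa using huv))
  simpa using congrArg Units.val this

theorem Function.Bijective.eq_invFun_iff {α β : Type*} [Nonempty α] {f : α → β}
    (hf : Bijective f) {a : α} {b : β} : a = invFun f b ↔ f a = b := by
  constructor
  · rintro rfl
    exact invFun_eq (hf.surjective b)
  · rintro rfl
    exact (leftInverse_invFun hf.injective a).symm

theorem pow_pow_eq_self_of_dvd {M : Type*} [Monoid M] {x : M} {p d i : ℕ}
    (hx : x ^ p ^ d = x) (hdi : d ∣ i) : x ^ p ^ i = x := by
  obtain ⟨k, rfl⟩ := hdi
  induction k with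
  | zero => simp
  | succ k ih => rw [Nat.mul_succ, pow_add, pow_mul, ih, hx]

section CharTwo

variable {R : Type*} [CommRing R] [CharP R 2] (i : ℕ)

theorem CharTwo.add_pow_two_pow_add_one (u v : R) :
    (u + v) ^ (2 ^ i + 1) =
      u ^ (2 ^ i + 1) + u ^ 2 ^ i * v + u * v ^ 2 ^ i + v ^ (2 ^ i + 1) := by
  rw [pow_succ, add_pow_char_pow]
  ring

theorem CharTwo.add_pow_two_pow_add_one_of_eq_zero_or_eq_one (a : R) {e : R}
    (he : e = 0 ∨ e = 1) :
    (a + e) ^ (2 ^ i + 1) = a ^ (2 ^ i + 1) + (a ^ 2 ^ i + a + 1) * e := by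
  rcases he with rfl | rfl
  · simp
  · rw [CharTwo.add_pow_two_pow_add_one]
    ring

theorem CharTwo.add_mul_pow_add_mul_add_pow {c : R} (hc : c ^ 2 ^ i = c) (u w : R) :
    (u + c * w) ^ (2 ^ i + 1) + c * (u + w) ^ (2 ^ i + 1) =
      (c + 1) * (u ^ (2 ^ i + 1) + c * w ^ (2 ^ i + 1)) := by
  rw [CharTwo.add_pow_two_pow_add_one, CharTwo.add_pow_two_pow_add_one, mul_pow, mul_pow,
    pow_succ c, hc]
  linear_combination (c * u ^ 2 ^ i * w + c * u * w ^ 2 ^ i) * CharTwo.two_eq_zero (R := R)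

end CharTwo

theorem CharTwo.add_pow_add_mul_add_pow_eq_iff {K : Type*} [Field K] [CharP K 2] (i : ℕ)
    {c : K} (hc : c ^ 2 ^ i = c) (hc1 : c ≠ 1) (x a b e₁ e₂ : K)
    (he : e₁ + e₂ = 0 ∨ e₁ + e₂ = 1) :
    (x + a + e₁) ^ (2 ^ i + 1) + c * (x + e₂) ^ (2 ^ i + 1) = b ↔
      (x + (a + e₁ + c * e₂) / (c + 1)) ^ (2 ^ i + 1) =
        c / (c + 1) ^ 2 * (a ^ (2 ^ i + 1) + (a ^ 2 ^ i + a + 1) * (e₁ + e₂)) + b / (c + 1) := by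
  have hc1' : c + 1 ≠ 0 := by rwa [Ne, CharTwo.add_eq_zero]
  have htwo : (2 : K) = 0 := CharTwo.two_eq_zero
  have hx₁ :
      x + a + e₁ = x + (a + e₁ + c * e₂) / (c + 1) + c * ((a + (e₁ + e₂)) / (c + 1)) := by
    field_simp
    linear_combination -c * e₂ * htwo
  have hx₂ : x + e₂ = x + (a + e₁ + c * e₂) / (c + 1) + (a + (e₁ + e₂)) / (c + 1) := by
    field_simp
    linear_combination -(a + e₁) * htwo
  have ht : c * ((a + (e₁ + e₂)) / (c + 1)) ^ (2 ^ i + 1) =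
      c / (c + 1) ^ 2 * (a ^ (2 ^ i + 1) + (a ^ 2 ^ i + a + 1) * (e₁ + e₂)) := by
    rw [div_pow, pow_succ (c + 1), add_pow_char_pow, one_pow, hc,
      CharTwo.add_pow_two_pow_add_one_of_eq_zero_or_eq_one i a he]
    ring
  rw [hx₁, hx₂, CharTwo.add_mul_pow_add_mul_add_pow i hc, ← ht, mul_comm, ← eq_div_iff hc1',
    CharTwo.add_eq_iff_eq_add, add_comm (b / (c + 1))]

theorem stmt4_general (n i d : ℕ) (hn : 0 < n)
    (hd2 : d = Nat.gcd (2 * i) n) (hd1 : d = Nat.gcd i n)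
    (c : GaloisField 2 n) (hc : c ^ 2 ^ d = c) (hc1 : c ≠ 1)
    (a b ε₁ ε₂ : GaloisField 2 n)
    (hε₁ : ε₁ = 0 ∨ ε₁ = 1) (hε₂ : ε₂ = 0 ∨ ε₂ = 1) :
    ∀ x : GaloisField 2 n,
      (x + a + ε₁) ^ (2 ^ i + 1) + c * (x + ε₂) ^ (2 ^ i + 1) = b ↔
      x = (a + ε₁ + c * ε₂) / (c + 1) +
        Function.invFun (fun y : GaloisField 2 n => y ^ (2 ^ i + 1))
          (c / (c + 1) ^ 2 *
            (a ^ (2 ^ i + 1) + (a ^ 2 ^ i + a + 1) * (ε₁ + ε₂)) + b / (c + 1)) := by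
  intro x
  have hci : c ^ 2 ^ i = c := pow_pow_eq_self_of_dvd hc (hd1 ▸ Nat.gcd_dvd_left i n)
  have hε : ε₁ + ε₂ = 0 ∨ ε₁ + ε₂ = 1 := by
    rcases hε₁ with rfl | rfl <;> rcases hε₂ with rfl | rfl <;>
      simp [CharTwo.add_self_eq_zero]
  have hbij : Bijective fun y : GaloisField 2 n => y ^ (2 ^ i + 1) := by
    refine pow_bijective_of_coprime (by positivity) ?_
    rw [GaloisField.card 2 n hn.ne']
    exact (coprime_two_pow_add_one_two_pow_sub_one hn.ne' (hd2.symm.trans hd1)).symm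
  rw [CharTwo.add_pow_add_mul_add_pow_eq_iff i hci hc1 x a b ε₁ ε₂ hε,
    ← hbij.eq_invFun_iff, CharTwo.add_eq_iff_eq_add, add_comm (invFun _ _)]

/-- for `c ∈ F_{2^d} \ F_2` with `d = gcd(2i,n) = gcd(i,n) < n`,
`a, b ∈ F_{2^n}` and `ε₁, ε₂ ∈ F_2`, the equation
`(x+a+ε₁)^{2^i+1} + c(x+ε₂)^{2^i+1} = b` has the unique solution given by the
explicit formula, where the `1/(2^i+1)`-th power is the inverse of `x ↦ x^{2^i+1}`. -/
theorem stmt4 (n i d : ℕ) (hn : 0 < n) (hi : 0 < i)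
    (hd2 : d = Nat.gcd (2 * i) n) (hd1 : d = Nat.gcd i n) (hdn : d < n)
    (c : GaloisField 2 n) (hc : c ^ 2 ^ d = c) (hc0 : c ≠ 0) (hc1 : c ≠ 1)
    (a b ε₁ ε₂ : GaloisField 2 n)
    (hε₁ : ε₁ = 0 ∨ ε₁ = 1) (hε₂ : ε₂ = 0 ∨ ε₂ = 1) :
    ∀ x : GaloisField 2 n,
      (x + a + ε₁) ^ (2 ^ i + 1) + c * (x + ε₂) ^ (2 ^ i + 1) = b ↔
      x = (a + ε₁ + c * ε₂) / (c + 1) +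
        Function.invFun (fun y : GaloisField 2 n => y ^ (2 ^ i + 1))
          (c / (c + 1) ^ 2 *
            (a ^ (2 ^ i + 1) + (a ^ 2 ^ i + a + 1) * (ε₁ + ε₂)) + b / (c + 1)) :=
  stmt4_general n i d hn hd2 hd1 c hc hc1 a b ε₁ ε₂ hε₁ hε₂
end

section
/- Let n = dm be even with d = gcd(2i, n) = gcd(i, n) < n, and let c ∈ F_{2^d} \ F_2. If m > 3 and 3 ∤ m, then for every w ∈ F_{2^n} \ F_{2^d} the set { 1/c, 1/w^{2^i+1}, w + w^{2^i} } is linearly independent over F_{2^d}. If m > 3 and 3 | m, then for every w ∈ F_{2^n} \ F_{2^{3d}} the set { 1/c, 1/w^{2^i+1}, w + w^{2^i} } is linearly independent over F_{2^d}. -/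
/-!
Let σ be the ring endomorphism x ↦ x^(2^i); it fixes `F_{2^d}` pointwise since `d ∣ i`. After
clearing denominators, subtracting suitable multiples of the relation and of its σ-image eliminates
`a₁` and leaves `(σ²w - w) · (a₂ - a₃ · w · σw · σ²w) = 0`; applying σ once more gives
`a₃ · σw · σ²w · (w - σ³w) = 0`. So everything vanishes as soon as `σ²w ≠ w` and `σ³w ≠ w`.
In `F_{2^n}` the fixed points of `σᵏ` form `F_{2^gcd(ki, n)}`; here `gcd(2i, n) = d` and
`gcd(3i, n)` divides `3d`, and equals `d` when `3 ∤ m`.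
-/

open Function

theorem fixed_coeffs_eq_zero_of_combination_eq_zero {F : Type*} [Field F] (σ : F →+* F)
    {c w a₁ a₂ a₃ : F} (hc0 : c ≠ 0) (hc : σ c = c)
    (h₁ : σ a₁ = a₁) (h₂ : σ a₂ = a₂) (h₃ : σ a₃ = a₃)
    (hw2 : σ (σ w) ≠ w) (hw3 : σ (σ (σ w)) ≠ w)
    (H : a₁ * (1 / c) + a₂ * (1 / (w * σ w)) + a₃ * (w + σ w) = 0) :
    a₁ = 0 ∧ a₂ = 0 ∧ a₃ = 0 := by
  set w₁ := σ w
  set w₂ := σ w₁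
  set w₃ := σ w₂
  have hw : w ≠ 0 := by rintro rfl; simp [w₁, w₂] at hw2
  have hw₁ : w₁ ≠ 0 := (map_ne_zero σ).2 hw
  have hw₂ : w₂ ≠ 0 := (map_ne_zero σ).2 hw₁
  have e₁ : a₁ * (w * w₁) + a₂ * c + a₃ * c * (w * w₁) * (w + w₁) = 0 := by
    field_simp at H
    linear_combination H
  have e₂ : a₁ * (w₁ * w₂) + a₂ * c + a₃ * c * (w₁ * w₂) * (w₁ + w₂) = 0 := by
    simpa only [map_add, map_mul, map_zero, hc, h₁, h₂, h₃] using congrArg σ e₁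
  have ha₂ : a₂ = a₃ * (w * w₁ * w₂) := by
    have h : c * (w₂ - w) * (a₂ - a₃ * (w * w₁ * w₂)) = 0 := by
      linear_combination w₂ * e₁ - w * e₂
    simpa [hc0, sub_eq_zero, hw2] using h
  have ha₂' : a₂ = a₃ * (w₁ * w₂ * w₃) := by
    simpa only [map_mul, h₂, h₃] using congrArg σ ha₂
  have ha₃ : a₃ = 0 := by
    have h : a₃ * (w₁ * w₂) * (w - w₃) = 0 := by linear_combination ha₂' - ha₂
    simpa [hw₁, hw₂, sub_eq_zero, Ne.symm hw3] using h
  have ha₂0 : a₂ = 0 := by rw [ha₂, ha₃, zero_mul]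
  refine ⟨?_, ha₂0, ha₃⟩
  rw [ha₂0, ha₃] at e₁
  simpa [hw, hw₁] using e₁

theorem isPeriodicPt_frobenius_iff {R : Type*} [CommSemiring R] (p : ℕ) [ExpChar R p] (k : ℕ)
    (x : R) : IsPeriodicPt (frobenius R p) k x ↔ x ^ p ^ k = x := by
  rw [IsPeriodicPt, IsFixedPt, iterate_frobenius]

theorem Nat.gcd_mul_left_dvd_mul_gcd_left (k i n : ℕ) : Nat.gcd (k * i) n ∣ k * Nat.gcd i n := by
  rw [← Nat.gcd_mul_left]
  exact Nat.gcd_dvd_gcd_of_dvd_right _ (dvd_mul_left n k)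

theorem Nat.gcd_mul_left_dvd_of_coprime {k i n d m : ℕ} (hn : n = d * m) (hd : d = Nat.gcd i n)
    (hkm : Nat.Coprime k m) : Nat.gcd (k * i) n ∣ d := by
  have h : Nat.gcd (k * d) n = d := by
    rw [hn, mul_comm k, Nat.gcd_mul_left, hkm, mul_one]
  exact h ▸ Nat.dvd_gcd (hd ▸ Nat.gcd_mul_left_dvd_mul_gcd_left k i n) (Nat.gcd_dvd_right _ _)

theorem GaloisField.pow_pow_eq_self (p : ℕ) [Fact p.Prime] {n : ℕ} (hn : n ≠ 0)
    (x : GaloisField p n) : x ^ p ^ n = x := by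
  have : Fintype (GaloisField p n) := Fintype.ofFinite _
  rw [← GaloisField.card p n hn, ← Fintype.card_eq_nat_card]
  exact FiniteField.pow_card x

theorem fixed_coeffs_eq_zero_of_frobenius {K : Type*} [Field K] (p : ℕ) [ExpChar K p]
    {n i d e : ℕ} (hK : ∀ x : K, x ^ p ^ n = x) (hdi : d ∣ i)
    (h₂ₑ : Nat.gcd (2 * i) n ∣ e) (h₃ₑ : Nat.gcd (3 * i) n ∣ e)
    {c w a₁ a₂ a₃ : K} (hc0 : c ≠ 0) (hc : c ^ p ^ d = c) (hw : ¬w ^ p ^ e = w)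
    (h₁ : a₁ ^ p ^ d = a₁) (h₂ : a₂ ^ p ^ d = a₂) (h₃ : a₃ ^ p ^ d = a₃)
    (H : a₁ * (1 / c) + a₂ * (1 / w ^ (p ^ i + 1)) + a₃ * (w + w ^ p ^ i) = 0) :
    a₁ = 0 ∧ a₂ = 0 ∧ a₃ = 0 := by
  simp only [← isPeriodicPt_frobenius_iff p] at hK hc hw h₁ h₂ h₃
  have fixed {x : K} (hx : IsPeriodicPt (frobenius K p) d x) : iterateFrobenius K p i x = x := by
    rw [coe_iterateFrobenius]
    exact hx.trans_dvd hdi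
  have not_periodic {k : ℕ} (hk : Nat.gcd (k * i) n ∣ e) :
      ¬IsPeriodicPt (frobenius K p) (k * i) w :=
    fun h => hw ((h.gcd (hK w)).trans_dvd hk)
  refine fixed_coeffs_eq_zero_of_combination_eq_zero (iterateFrobenius K p i) (w := w) hc0
    (fixed hc) (fixed h₁) (fixed h₂) (fixed h₃) ?_ ?_ ?_
  · simpa [IsPeriodicPt, IsFixedPt, coe_iterateFrobenius, ← iterate_add_apply, two_mul] using
      not_periodic h₂ₑ
  · simpa [IsPeriodicPt, IsFixedPt, coe_iterateFrobenius, ← iterate_add_apply,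
      show 3 * i = i + (i + i) by ring] using not_periodic h₃ₑ
  · rwa [iterateFrobenius_def, ← pow_succ']

theorem stmt6_general (n i d m : ℕ) (hnm : n = d * m)
    (hd2 : d = Nat.gcd (2 * i) n) (hd1 : d = Nat.gcd i n) (hdn : d < n)
    (c : GaloisField 2 n) (hc : c ^ 2 ^ d = c) (hc0 : c ≠ 0) :
    (m > 3 → ¬(3 ∣ m) →
      ∀ w : GaloisField 2 n, ¬(w ^ 2 ^ d = w) →
        ∀ a₁ a₂ a₃ : GaloisField 2 n,
          a₁ ^ 2 ^ d = a₁ → a₂ ^ 2 ^ d = a₂ → a₃ ^ 2 ^ d = a₃ →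
          a₁ * (1 / c) + a₂ * (1 / w ^ (2 ^ i + 1)) + a₃ * (w + w ^ 2 ^ i) = 0 →
          a₁ = 0 ∧ a₂ = 0 ∧ a₃ = 0) ∧
    (m > 3 → 3 ∣ m →
      ∀ w : GaloisField 2 n, ¬(w ^ 2 ^ (3 * d) = w) →
        ∀ a₁ a₂ a₃ : GaloisField 2 n,
          a₁ ^ 2 ^ d = a₁ → a₂ ^ 2 ^ d = a₂ → a₃ ^ 2 ^ d = a₃ →
          a₁ * (1 / c) + a₂ * (1 / w ^ (2 ^ i + 1)) + a₃ * (w + w ^ 2 ^ i) = 0 →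
          a₁ = 0 ∧ a₂ = 0 ∧ a₃ = 0) := by
  have hK := GaloisField.pow_pow_eq_self 2 (n := n) (by omega)
  have hdi : d ∣ i := hd1 ▸ Nat.gcd_dvd_left i n
  constructor
  · intro _ hm w hw a₁ a₂ a₃
    have hcop : Nat.Coprime 3 m := (Nat.Prime.coprime_iff_not_dvd Nat.prime_three).2 hm
    exact fixed_coeffs_eq_zero_of_frobenius 2 hK hdi hd2.symm.dvd
      (Nat.gcd_mul_left_dvd_of_coprime hnm hd1 hcop) hc0 hc hw
  · intro _ _ w hw a₁ a₂ a₃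
    have h₃ : Nat.gcd (3 * i) n ∣ 3 * d := hd1 ▸ Nat.gcd_mul_left_dvd_mul_gcd_left 3 i n
    exact fixed_coeffs_eq_zero_of_frobenius 2 hK hdi (hd2 ▸ dvd_mul_left d 3) h₃ hc0 hc hw

/-- let `n = dm` be even with `d = gcd(2i,n) = gcd(i,n) < n` and
`c ∈ F_{2^d} \ F_2`. If `m > 3` with `3 ∤ m` (resp. `3 ∣ m`), then for every
`w ∉ F_{2^d}` (resp. `w ∉ F_{2^{3d}}`) the set `{1/c, 1/w^{2^i+1}, w + w^{2^i}}`
is linearly independent over `F_{2^d} = {a : a^{2^d} = a}`. -/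
theorem stmt6 (n i d m : ℕ) (hnm : n = d * m) (hne : Even n)
    (hd2 : d = Nat.gcd (2 * i) n) (hd1 : d = Nat.gcd i n) (hdn : d < n)
    (c : GaloisField 2 n) (hc : c ^ 2 ^ d = c) (hc0 : c ≠ 0) (hc1 : c ≠ 1) :
    (m > 3 → ¬(3 ∣ m) →
      ∀ w : GaloisField 2 n, ¬(w ^ 2 ^ d = w) →
        ∀ a₁ a₂ a₃ : GaloisField 2 n,
          a₁ ^ 2 ^ d = a₁ → a₂ ^ 2 ^ d = a₂ → a₃ ^ 2 ^ d = a₃ →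
          a₁ * (1 / c) + a₂ * (1 / w ^ (2 ^ i + 1)) + a₃ * (w + w ^ 2 ^ i) = 0 →
          a₁ = 0 ∧ a₂ = 0 ∧ a₃ = 0) ∧
    (m > 3 → 3 ∣ m →
      ∀ w : GaloisField 2 n, ¬(w ^ 2 ^ (3 * d) = w) →
        ∀ a₁ a₂ a₃ : GaloisField 2 n,
          a₁ ^ 2 ^ d = a₁ → a₂ ^ 2 ^ d = a₂ → a₃ ^ 2 ^ d = a₃ →
          a₁ * (1 / c) + a₂ * (1 / w ^ (2 ^ i + 1)) + a₃ * (w + w ^ 2 ^ i) = 0 →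
          a₁ = 0 ∧ a₂ = 0 ∧ a₃ = 0) :=
  stmt6_general n i d m hnm hd2 hd1 hdn c hc hc0
end

section
/- Let n > 1, let α ∈ F_{2^n} satisfy tr(α + 1) = 0, let d = gcd(n, 2i), and let h_α(x) = x + tr(αx + x^{2^i+1}) on F_{2^n}. Then: (i) for every c ∈ F_{2^d} \ F_2, the c-differential uniformity of h_α equals 1 (h_α is PcN); (ii) for every c ∈ F_{2^n} \ F_{2^d}, the c-differential uniformity of h_α equals 2 (h_α is APcN). -/
/-!
Write `h_α = id + f` with `f x = tr (α x + x ^ (2 ^ i + 1)) ∈ 𝔽₂` and `γ = (1 + c)⁻¹`.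
Since `f (x + a) = f x + f a + B(a, x)` for the polar form
`B(a, x) = tr (a x ^ 2 ^ i + a ^ 2 ^ i x)`, and `tr (α + 1) = 0` makes `f` invariant under
`x ↦ x + 1`, two distinct solutions `x, y` of `h_α (x + a) + c h_α x = b` must satisfy
`x + y + γ ∈ 𝔽₂` and `B(a, γ) = 1`.
Moreover `B(a, γ) = tr (a ^ 2 ^ i (γ ^ 2 ^ (2 i) + γ))`, and `γ ^ 2 ^ (2 i) = γ` iff
`γ ∈ 𝔽_{2^d}` iff `c ∈ 𝔽_{2^d}`. So for `c ∈ 𝔽_{2^d}` every `c`-derivative is injective.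
Otherwise `B(·, γ)` is a nonzero linear form, so some `a` has `B(a, γ) = 1`, which yields the two
solutions `0` and `γ + f γ`; three solutions are impossible, as the three values `x + y + γ`
would add up to `γ ∉ 𝔽₂`.
-/

/-- The absolute trace from `F_{2^n}` to its prime field, computed inside the field. -/
noncomputable def aTr {K : Type} [CommRing K] (n : ℕ) (x : K) : K :=
  ∑ k ∈ Finset.range n, x ^ 2 ^ k

/-- The `c`-differential uniformity of `F`. -/
noncomputable def cDelta {K : Type} [Field K] (c : K) (F : K → K) : ℕ :=
  sSup { k : ℕ | ∃ a b : K, (c = 1 → a ≠ 0) ∧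
    k = Nat.card {x : K // F (x + a) + c * F x = b} }

/-- The function `h_α(x) = x + tr(αx + x^{2^i+1})` on `F_{2^n}`. -/
noncomputable def hAlpha (n i : ℕ) (α : GaloisField 2 n) (x : GaloisField 2 n) :
    GaloisField 2 n :=
  x + aTr n (α * x + x ^ (2 ^ i + 1))

section PrimeField

variable {A : Type} [Semiring A] [Algebra (ZMod 2) A]

theorem eq_zero_or_eq_one_of_mem_bot {t : A} (ht : t ∈ (⊥ : Subalgebra (ZMod 2) A)) :
    t = 0 ∨ t = 1 := by
  obtain ⟨s, rfl⟩ := Algebra.mem_bot.mp ht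
  fin_cases s
  exacts [Or.inl (map_zero _), Or.inr (map_one _)]

theorem pow_two_pow_eq_self_of_mem_bot {t : A} (ht : t ∈ (⊥ : Subalgebra (ZMod 2) A)) (j : ℕ) :
    t ^ 2 ^ j = t := by
  rcases eq_zero_or_eq_one_of_mem_bot ht with rfl | rfl <;> simp

end PrimeField

theorem aTr_zero {K : Type} [CommRing K] (n : ℕ) : aTr n (0 : K) = 0 := by
  simp [aTr]

section CharTwo

variable {K : Type} [CommRing K] [CharP K 2] {n : ℕ}

theorem aTr_add (x y : K) : aTr n (x + y) = aTr n x + aTr n y := by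
  simp only [aTr, add_pow_char_pow, Finset.sum_add_distrib]

theorem aTr_pow_two_pow_eq_pow (j : ℕ) (x : K) : aTr n (x ^ 2 ^ j) = aTr n x ^ 2 ^ j := by
  simp only [aTr, sum_pow_char_pow, ← pow_mul, mul_comm]

end CharTwo

section FiniteField

variable {K : Type} [Field K] [Finite K] [Algebra (ZMod 2) K] {n : ℕ}

theorem aTr_eq_algebraMap_trace (hK : Module.finrank (ZMod 2) K = n) (x : K) :
    aTr n x = algebraMap (ZMod 2) K (Algebra.trace (ZMod 2) K x) := by
  rw [FiniteField.algebraMap_trace_eq_sum_pow, hK, Nat.card_zmod]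
  rfl

theorem pow_two_pow_eq_self_of_finrank_eq (hK : Module.finrank (ZMod 2) K = n) (x : K) :
    x ^ 2 ^ n = x := by
  have := Fintype.ofFinite K
  rw [← hK, FiniteField.pow_finrank_eq_card, FiniteField.pow_card]

theorem aTr_mem_bot (hK : Module.finrank (ZMod 2) K = n) (x : K) :
    aTr n x ∈ (⊥ : Subalgebra (ZMod 2) K) :=
  Algebra.mem_bot.mpr ⟨_, (aTr_eq_algebraMap_trace hK x).symm⟩

theorem aTr_pow_two_pow [CharP K 2] (hK : Module.finrank (ZMod 2) K = n) (j : ℕ) (x : K) :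
    aTr n (x ^ 2 ^ j) = aTr n x := by
  rw [aTr_pow_two_pow_eq_pow, pow_two_pow_eq_self_of_mem_bot (aTr_mem_bot hK x)]

theorem exists_aTr_mul_eq_one (hK : Module.finrank (ZMod 2) K = n) {β : K} (hβ : β ≠ 0) :
    ∃ b, aTr n (b * β) = 1 := by
  obtain ⟨w, hw⟩ := Algebra.trace_surjective (ZMod 2) K 1
  refine ⟨w * β⁻¹, ?_⟩
  rw [inv_mul_cancel_right₀ hβ, aTr_eq_algebraMap_trace hK, hw, map_one]

end FiniteField

noncomputable def fAlpha {K : Type} [CommRing K] (n i : ℕ) (α x : K) : K :=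
  aTr n (α * x + x ^ (2 ^ i + 1))

noncomputable def polarTr {K : Type} [CommRing K] (n i : ℕ) (a x : K) : K :=
  aTr n (a * x ^ 2 ^ i + a ^ 2 ^ i * x)

theorem polarTr_comm {K : Type} [CommRing K] (n i : ℕ) (a x : K) :
    polarTr n i a x = polarTr n i x a := by
  unfold polarTr
  congr 1
  ring

section Polar

variable {K : Type} [CommRing K] [CharP K 2] {n i : ℕ}

theorem fAlpha_add (α x a : K) :
    fAlpha n i α (x + a) = fAlpha n i α x + fAlpha n i α a + polarTr n i a x := by
  have h : α * (x + a) + (x + a) ^ (2 ^ i + 1) =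
      (α * x + x ^ (2 ^ i + 1)) + (α * a + a ^ (2 ^ i + 1)) + (a * x ^ 2 ^ i + a ^ 2 ^ i * x) := by
    rw [pow_succ, pow_succ, pow_succ, add_pow_char_pow]
    ring
  simp only [fAlpha, polarTr, h, aTr_add]

theorem polarTr_add_right (a x y : K) :
    polarTr n i a (x + y) = polarTr n i a x + polarTr n i a y := by
  have h : a * (x + y) ^ 2 ^ i + a ^ 2 ^ i * (x + y) =
      (a * x ^ 2 ^ i + a ^ 2 ^ i * x) + (a * y ^ 2 ^ i + a ^ 2 ^ i * y) := by
    rw [add_pow_char_pow]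
    ring
  simp only [polarTr, h, aTr_add]

end Polar

section PolarFinite

variable {K : Type} [Field K] [CharP K 2] [Finite K] [Algebra (ZMod 2) K] {n i : ℕ}

theorem polarTr_eq_zero_of_mem_bot (hK : Module.finrank (ZMod 2) K = n) (a : K) {t : K}
    (ht : t ∈ (⊥ : Subalgebra (ZMod 2) K)) : polarTr n i a t = 0 := by
  rcases eq_zero_or_eq_one_of_mem_bot ht with rfl | rfl
  · simp [polarTr, aTr_zero]
  · rw [polarTr, one_pow, mul_one, mul_one, aTr_add, aTr_pow_two_pow hK,
      CharTwo.add_self_eq_zero]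

theorem polarTr_eq_aTr (hK : Module.finrank (ZMod 2) K = n) (a γ : K) :
    polarTr n i a γ = aTr n (a ^ 2 ^ i * (γ ^ 2 ^ (2 * i) + γ)) := by
  rw [polarTr, aTr_add, ← aTr_pow_two_pow hK i (a * γ ^ 2 ^ i), mul_add, aTr_add, mul_pow,
    ← pow_mul, ← pow_add, two_mul]

theorem polarTr_eq_zero (hK : Module.finrank (ZMod 2) K = n) (a : K) {γ : K}
    (hγ : γ ^ 2 ^ (2 * i) = γ) : polarTr n i a γ = 0 := by
  rw [polarTr_eq_aTr hK, hγ, CharTwo.add_self_eq_zero, mul_zero, aTr_zero]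

theorem exists_polarTr_eq_one (hK : Module.finrank (ZMod 2) K = n) {γ : K}
    (hγ : γ ^ 2 ^ (2 * i) ≠ γ) : ∃ a, polarTr n i a γ = 1 := by
  obtain ⟨b, hb⟩ := exists_aTr_mul_eq_one hK (mt CharTwo.add_eq_zero.mp hγ)
  obtain ⟨a, rfl⟩ := Finite.injective_iff_surjective.mp (iterateFrobenius K 2 i).injective b
  exact ⟨a, by rw [polarTr_eq_aTr hK]; exact hb⟩

theorem fAlpha_add_of_mem_bot (hK : Module.finrank (ZMod 2) K = n) {α : K}
    (hα : aTr n (α + 1) = 0) (x : K) {t : K} (ht : t ∈ (⊥ : Subalgebra (ZMod 2) K)) :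
    fAlpha n i α (x + t) = fAlpha n i α x := by
  have hft : fAlpha n i α t = 0 := by
    rcases eq_zero_or_eq_one_of_mem_bot ht with rfl | rfl
    · simp [fAlpha, aTr_zero]
    · rwa [fAlpha, mul_one, one_pow]
  rw [fAlpha_add, hft, polarTr_comm n i t x, polarTr_eq_zero_of_mem_bot hK x ht, add_zero, add_zero]

end PolarFinite

theorem pow_pow_gcd_eq_self_iff {M : Type} [Monoid M] {p m k : ℕ} {x : M} (hm : x ^ p ^ m = x) :
    x ^ p ^ m.gcd k = x ↔ x ^ p ^ k = x := by
  have hper (j : ℕ) : Function.IsPeriodicPt (· ^ p) j x ↔ x ^ p ^ j = x := by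
    rw [Function.IsPeriodicPt, Function.IsFixedPt, pow_iterate]
  rw [← hper, ← hper]
  exact ⟨fun h => h.trans_dvd (Nat.gcd_dvd_right m k), ((hper m).mpr hm).gcd⟩

theorem inv_one_add_pow_two_pow_eq_self_iff {K : Type} [Field K] [CharP K 2] (c : K) (j : ℕ) :
    (1 + c)⁻¹ ^ 2 ^ j = (1 + c)⁻¹ ↔ c ^ 2 ^ j = c := by
  rw [inv_pow, add_pow_char_pow, one_pow, inv_inj, add_right_inj]

def cDeriv {K : Type} [Field K] (F : K → K) (c a x : K) : K := F (x + a) + c * F x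

theorem cDelta_eq_of_card_le {K : Type} [Field K] {c : K} {F : K → K} {m : ℕ}
    (hle : ∀ a b, Nat.card {x // cDeriv F c a x = b} ≤ m) {a b : K} (ha : c = 1 → a ≠ 0)
    (hab : Nat.card {x // cDeriv F c a x = b} = m) : cDelta c F = m :=
  IsGreatest.csSup_eq ⟨⟨a, b, ha, hab.symm⟩, by rintro k ⟨a, b, -, rfl⟩; exact hle a b⟩

section Card

variable {α : Type} [Finite α]

theorem card_fiber_eq_one_of_injective {g : α → α} (hg : g.Injective) (b : α) :
    Nat.card {x // g x = b} = 1 := by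
  obtain ⟨x, hx⟩ := Finite.injective_iff_surjective.mp hg b
  exact Nat.card_eq_one_iff_unique.mpr
    ⟨⟨fun u v => Subtype.ext (hg (u.2.trans v.2.symm))⟩, ⟨⟨x, hx⟩⟩⟩

theorem card_subtype_le_two {P : α → Prop}
    (h : ∀ x y z, P x → P y → P z → x ≠ y → x ≠ z → y ≠ z → False) :
    Nat.card {x // P x} ≤ 2 := by
  change {x | P x}.ncard ≤ 2
  by_contra! hlt
  obtain ⟨x, y, z, hx, hy, hz, hxy, hxz, hyz⟩ := (Set.two_lt_ncard_iff (Set.toFinite _)).mp hlt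
  exact h x y z hx hy hz hxy hxz hyz

theorem two_le_card_subtype {P : α → Prop} {x y : α} (hx : P x) (hy : P y) (hxy : x ≠ y) :
    2 ≤ Nat.card {x // P x} := by
  change 2 ≤ {x | P x}.ncard
  exact (Set.one_lt_ncard_iff (Set.toFinite _)).mpr ⟨x, y, hx, hy, hxy⟩

end Card

section Collision

variable {n i : ℕ} {α c a : GaloisField 2 n}

theorem hAlpha_cDeriv_add_cDeriv (x y : GaloisField 2 n) :
    cDeriv (hAlpha n i α) c a x + cDeriv (hAlpha n i α) c a y =
      (1 + c) * (x + y + (fAlpha n i α x + fAlpha n i α y)) + polarTr n i a (x + y) := by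
  have hf (z : GaloisField 2 n) : hAlpha n i α z = z + fAlpha n i α z := rfl
  simp only [cDeriv, hf, fAlpha_add α _ a, polarTr_add_right]
  linear_combination (a + fAlpha n i α a) * (CharTwo.two_eq_zero : (2 : GaloisField 2 n) = 0)

theorem hAlpha_eq_or_of_cDeriv_eq (hn : n ≠ 0) (hα : aTr n (α + 1) = 0) (hc : c ≠ 1)
    {x y : GaloisField 2 n} (h : cDeriv (hAlpha n i α) c a x = cDeriv (hAlpha n i α) c a y) :
    x = y ∨ (x + y + (1 + c)⁻¹ ∈ (⊥ : Subalgebra (ZMod 2) (GaloisField 2 n)) ∧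
      polarTr n i a (1 + c)⁻¹ = 1) := by
  have hK := GaloisField.finrank 2 hn
  have hc1 : 1 + c ≠ 0 := fun h0 => hc (CharTwo.add_eq_zero.mp h0).symm
  have ht : fAlpha n i α x + fAlpha n i α y ∈ (⊥ : Subalgebra (ZMod 2) (GaloisField 2 n)) :=
    add_mem (aTr_mem_bot hK _) (aTr_mem_bot hK _)
  have hsum : (1 + c) * (x + y + (fAlpha n i α x + fAlpha n i α y)) = polarTr n i a (x + y) := by
    rw [← CharTwo.add_eq_zero, ← hAlpha_cDeriv_add_cDeriv, h, CharTwo.add_self_eq_zero]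
  have hl : polarTr n i a (x + y) ∈ (⊥ : Subalgebra (ZMod 2) (GaloisField 2 n)) := aTr_mem_bot hK _
  rcases eq_zero_or_eq_one_of_mem_bot hl with hl | hl
  · left
    have hxy : x + y = fAlpha n i α x + fAlpha n i α y :=
      CharTwo.add_eq_zero.mp ((mul_eq_zero.mp (hsum.trans hl)).resolve_left hc1)
    -- `y` is a shift of `x` by an element of `𝔽₂`, which `fAlpha` does not see
    have hfy : fAlpha n i α y = fAlpha n i α x := by
      rw [← fAlpha_add_of_mem_bot hK hα x ht, ← hxy, ← add_assoc, CharTwo.add_self_eq_zero,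
        zero_add]
    rw [hfy, CharTwo.add_self_eq_zero] at hxy
    exact CharTwo.add_eq_zero.mp hxy
  · right
    have hγ : x + y + (fAlpha n i α x + fAlpha n i α y) = (1 + c)⁻¹ :=
      eq_inv_of_mul_eq_one_right (hsum.trans hl)
    refine ⟨?_, ?_⟩
    · rw [← hγ, ← add_assoc, CharTwo.add_self_eq_zero, zero_add]
      exact ht
    · rw [← hγ, polarTr_add_right, hl, polarTr_eq_zero_of_mem_bot hK a ht, add_zero]

theorem hAlpha_cDeriv_zero_eq (hn : n ≠ 0) (hα : aTr n (α + 1) = 0) (hc : c ≠ 1)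
    (ha : polarTr n i a (1 + c)⁻¹ = 1) :
    cDeriv (hAlpha n i α) c a 0 =
      cDeriv (hAlpha n i α) c a ((1 + c)⁻¹ + fAlpha n i α (1 + c)⁻¹) := by
  have hK := GaloisField.finrank 2 hn
  have hc1 : 1 + c ≠ 0 := fun h0 => hc (CharTwo.add_eq_zero.mp h0).symm
  have ht : fAlpha n i α (1 + c)⁻¹ ∈ (⊥ : Subalgebra (ZMod 2) (GaloisField 2 n)) :=
    aTr_mem_bot hK _
  have hf0 : fAlpha n i α (0 : GaloisField 2 n) = 0 := by simp [fAlpha, aTr_zero]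
  rw [← CharTwo.add_eq_zero, hAlpha_cDeriv_add_cDeriv, fAlpha_add_of_mem_bot hK hα _ ht, hf0,
    zero_add, zero_add, polarTr_add_right, ha, polarTr_eq_zero_of_mem_bot hK a ht]
  linear_combination mul_inv_cancel₀ hc1 +
    (1 + (1 + c) * fAlpha n i α (1 + c)⁻¹) * (CharTwo.two_eq_zero : (2 : GaloisField 2 n) = 0)

theorem hAlpha_card_fiber_le_two (hn : n ≠ 0) (hα : aTr n (α + 1) = 0)
    (hγ : (1 + c)⁻¹ ∉ (⊥ : Subalgebra (ZMod 2) (GaloisField 2 n))) (b : GaloisField 2 n) :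
    Nat.card {x // cDeriv (hAlpha n i α) c a x = b} ≤ 2 := by
  have hc : c ≠ 1 := by
    rintro rfl
    exact hγ (by rw [CharTwo.add_self_eq_zero, inv_zero]; exact zero_mem _)
  have hmem {u v : GaloisField 2 n} (hu : cDeriv (hAlpha n i α) c a u = b)
      (hv : cDeriv (hAlpha n i α) c a v = b) (huv : u ≠ v) : u + v + (1 + c)⁻¹ ∈ ⊥ :=
    ((hAlpha_eq_or_of_cDeriv_eq hn hα hc (hu.trans hv.symm)).resolve_left huv).1
  refine card_subtype_le_two fun x y z hx hy hz hxy hxz hyz => hγ ?_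
  have hsum : (x + y + (1 + c)⁻¹) + (x + z + (1 + c)⁻¹) + (y + z + (1 + c)⁻¹) = (1 + c)⁻¹ := by
    linear_combination (x + y + z + (1 + c)⁻¹) *
      (CharTwo.two_eq_zero : (2 : GaloisField 2 n) = 0)
  rw [← hsum]
  exact add_mem (add_mem (hmem hx hy hxy) (hmem hx hz hxz)) (hmem hy hz hyz)

end Collision

theorem stmt18_general (n i d : ℕ) (hn : 1 < n) (hd : d = Nat.gcd n (2 * i))
    (α : GaloisField 2 n) (hα : aTr n (α + 1) = 0) :
    (∀ c : GaloisField 2 n, c ^ 2 ^ d = c → c ≠ 0 → c ≠ 1 →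
      cDelta c (hAlpha n i α) = 1) ∧
    (∀ c : GaloisField 2 n, ¬(c ^ 2 ^ d = c) →
      cDelta c (hAlpha n i α) = 2) := by
  have hn0 : n ≠ 0 := by omega
  have hK := GaloisField.finrank 2 hn0
  have hfix (c : GaloisField 2 n) :
      c ^ 2 ^ d = c ↔ (1 + c)⁻¹ ^ 2 ^ (2 * i) = (1 + c)⁻¹ := by
    rw [← inv_one_add_pow_two_pow_eq_self_iff, hd,
      pow_pow_gcd_eq_self_iff (pow_two_pow_eq_self_of_finrank_eq hK _)]
  refine ⟨fun c hcd _ hc => ?_, fun c hcd => ?_⟩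
  · have hinj (a : GaloisField 2 n) : (cDeriv (hAlpha n i α) c a).Injective := fun x y h =>
      (hAlpha_eq_or_of_cDeriv_eq hn0 hα hc h).resolve_right fun ⟨_, h1⟩ =>
        zero_ne_one ((polarTr_eq_zero hK a ((hfix c).mp hcd)).symm.trans h1)
    exact cDelta_eq_of_card_le (fun a b => (card_fiber_eq_one_of_injective (hinj a) b).le)
      (fun h => absurd h hc) (card_fiber_eq_one_of_injective (hinj 0) 0)
  · have hc : c ≠ 1 := by rintro rfl; exact hcd (one_pow _)
    have hγ : (1 + c)⁻¹ ∉ (⊥ : Subalgebra (ZMod 2) (GaloisField 2 n)) := fun h =>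
      hcd ((inv_one_add_pow_two_pow_eq_self_iff c d).mp (pow_two_pow_eq_self_of_mem_bot h d))
    obtain ⟨a, ha⟩ := exists_polarTr_eq_one hK (mt (hfix c).mpr hcd)
    have hle (a : GaloisField 2 n) := hAlpha_card_fiber_le_two (i := i) (a := a) hn0 hα hγ
    have hy : (0 : GaloisField 2 n) ≠ (1 + c)⁻¹ + fAlpha n i α (1 + c)⁻¹ := fun h =>
      hγ (CharTwo.add_eq_zero.mp h.symm ▸ aTr_mem_bot hK _)
    exact cDelta_eq_of_card_le hle (fun h => absurd h hc) (le_antisymm (hle a _)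
      (two_le_card_subtype rfl (hAlpha_cDeriv_zero_eq hn0 hα hc ha).symm hy))

/-- for `n > 1`, `α` with `tr(α+1) = 0` and `d = gcd(n, 2i)`:
`h_α` is PcN for every `c ∈ F_{2^d} \ F_2`, and APcN for every
`c ∈ F_{2^n} \ F_{2^d}`. -/
theorem stmt18 (n i d : ℕ) (hn : 1 < n) (hi : 0 < i) (hd : d = Nat.gcd n (2 * i))
    (α : GaloisField 2 n) (hα : aTr n (α + 1) = 0) :
    (∀ c : GaloisField 2 n, c ^ 2 ^ d = c → c ≠ 0 → c ≠ 1 →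
      cDelta c (hAlpha n i α) = 1) ∧
    (∀ c : GaloisField 2 n, ¬(c ^ 2 ^ d = c) →
      cDelta c (hAlpha n i α) = 2) :=
  stmt18_general n i d hn hd α hα
end
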